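/- arXiv:2409.12884 — 3 statements merged into one kernel-verified Lean document; each statement's English description precedes it below -/
import Mathlib

section
/- If T is an orthogonal matrix in ℝ^{n×n} mapping C_α into C_α, with 3 ≤ α < n (α ≠ 2 and α ≠ n), then every entry of T lies in {−1, −1/2, 0, 1/2, 1}. -/
/-!
Pick an `α`-set `S ∋ j` and the two codewords supported on `S` with all signs `+`, resp. with
the sign at `j` flipped. Their difference is `(2/√α) eⱼ`, so the difference of their images is
`(2/√α)` times the `j`-th column of `T`. Both images are codewords, whose coordinates lie in
`{0, ±1/√α}`; hence `Tᵢⱼ = (√α/2)((Tc)ᵢ - (Tc')ᵢ) ∈ {0, ±1/2, ±1}`.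
-/

noncomputable def code (n α : ℕ) : Set (EuclideanSpace ℝ (Fin n)) :=
  {c | (∀ i, c i = 0 ∨ c i = 1 / Real.sqrt α ∨ c i = -(1 / Real.sqrt α)) ∧
       (Finset.univ.filter (fun i => c i ≠ 0)).card = α}

open Finset

namespace Code

variable {n : ℕ}

noncomputable def signedVec (S : Finset (Fin n)) (ε : Fin n → ℝ) : EuclideanSpace ℝ (Fin n) :=
  WithLp.toLp 2 fun k => if k ∈ S then ε k / Real.sqrt #S else 0

lemma signedVec_mem_code (S : Finset (Fin n)) {ε : Fin n → ℝ} (hε : ∀ k, ε k = 1 ∨ ε k = -1) :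
    signedVec S ε ∈ code n #S := by
  refine ⟨fun k => ?_, ?_⟩
  · by_cases hk : k ∈ S
    · rcases hε k with h | h <;> simp [signedVec, hk, h, neg_div]
    · simp [signedVec, hk]
  · congr 1
    ext k
    by_cases hk : k ∈ S
    · have hpos : (0 : ℝ) < #S := by exact_mod_cast card_pos.2 ⟨k, hk⟩
      rcases hε k with h | h <;> simp [signedVec, hk, h, hpos.ne']
    · simp [signedVec, hk]

lemma signedVec_sub_signedVec_update {S : Finset (Fin n)} {j : Fin n} (hj : j ∈ S) :
    (signedVec S 1).ofLp - (signedVec S (Function.update 1 j (-1))).ofLp =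
      Pi.single j (2 / Real.sqrt #S) := by
  funext k
  by_cases hk : k = j
  · subst hk
    simp only [signedVec, Pi.sub_apply, hj, if_true, Pi.one_apply, Function.update_self,
      Pi.single_eq_same]
    ring
  · by_cases hkS : k ∈ S <;> simp [signedVec, hk, hkS]

lemma sqrt_mul_apply_mem_of_mem_code {α : ℕ} (hα : 0 < α) {c : EuclideanSpace ℝ (Fin n)}
    (hc : c ∈ code n α) (i : Fin n) : Real.sqrt α * c i ∈ ({-1, 0, 1} : Set ℝ) := by
  have hs : Real.sqrt α ≠ 0 := (Real.sqrt_pos.2 (by exact_mod_cast hα)).ne'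
  rcases hc.1 i with h | h | h <;> simp [h, hs]

end Code

lemma half_sub_mem_of_mem {a b : ℝ} (ha : a ∈ ({-1, 0, 1} : Set ℝ))
    (hb : b ∈ ({-1, 0, 1} : Set ℝ)) : (a - b) / 2 ∈ ({-1, -(1/2), 0, 1/2, 1} : Set ℝ) := by
  simp only [Set.mem_insert_iff, Set.mem_singleton_iff] at ha hb ⊢
  rcases ha with rfl | rfl | rfl <;> rcases hb with rfl | rfl | rfl <;> norm_num

open Code in
theorem stmt_4_general (n α : ℕ) (hα : 3 ≤ α) (hαn : α < n)
    (T : Matrix (Fin n) (Fin n) ℝ)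
    (hmap : ∀ c ∈ code n α, (WithLp.toLp 2 (T.mulVec c) : EuclideanSpace ℝ (Fin n)) ∈ code n α) :
    ∀ i j, T i j ∈ ({-1, -(1/2), 0, 1/2, 1} : Set ℝ) := by
  intro i j
  obtain ⟨S, hjS, -, rfl⟩ : ∃ S : Finset (Fin n), {j} ⊆ S ∧ S ⊆ univ ∧ #S = α :=
    exists_subsuperset_card_eq (subset_univ _) (by simp; omega) (by simp; omega)
  have hsign : ∀ k, Function.update (1 : Fin n → ℝ) j (-1) k = 1 ∨
      Function.update (1 : Fin n → ℝ) j (-1) k = -1 := fun k => by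
    by_cases hk : k = j <;> simp [hk]
  set c := signedVec S 1
  set c' := signedVec S (Function.update 1 j (-1))
  have hTc := sqrt_mul_apply_mem_of_mem_code (by omega) (hmap c (signedVec_mem_code S (by simp))) i
  have hTc' := sqrt_mul_apply_mem_of_mem_code (by omega) (hmap c' (signedVec_mem_code S hsign)) i
  have hcol : (T.mulVec c) i - (T.mulVec c') i = T i j * (2 / Real.sqrt #S) := by
    rw [← Pi.sub_apply, ← Matrix.mulVec_sub, signedVec_sub_signedVec_update (singleton_subset_iff.1 hjS)]
    simp [div_eq_mul_inv]
  have hs : Real.sqrt #S ≠ 0 := (Real.sqrt_pos.2 (by exact_mod_cast (by omega : 0 < #S))).ne'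
  convert half_sub_mem_of_mem hTc hTc' using 1
  simp only [← mul_sub, hcol]
  field_simp

theorem stmt_4 (n α : ℕ) (hα : 3 ≤ α) (hαn : α < n)
    (T : Matrix (Fin n) (Fin n) ℝ) (hT : T ∈ Matrix.orthogonalGroup (Fin n) ℝ)
    (hmap : ∀ c ∈ code n α, (WithLp.toLp 2 (T.mulVec c) : EuclideanSpace ℝ (Fin n)) ∈ code n α) :
    ∀ i j, T i j ∈ ({-1, -(1/2), 0, 1/2, 1} : Set ℝ) :=
  stmt_4_general n α hα hαn T hmap
end

section
/- If T is an orthogonal matrix in ℝ^{n×n} with 3 ≤ α < n that maps C_α into C_α, then T is a signed permutation matrix: there is a permutation σ of {1,…,n} and signs ε_j ∈ {−1,1} such that the j-th column of T equals ε_j · e_{σ(j)}. -/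
/-!
Testing `T` on the codeword with signs `ε` on an `α`-set `S` shows that every signed partial row
sum `∑ j ∈ S, ε j * T i j` lies in `{0, 1, -1}`. Flipping a single sign then gives
`|T i j| ∈ {0, 1/2, 1}`. A unit row with an entry `±1/2` has exactly four such entries, and an
`α`-set containing three of them, with matching signs, has row sum at least `3/2`. So all entries lie in `{0, 1, -1}`, and an orthogonal matrix with such entries
is a signed permutation matrix.
-/

open Finset Matrix

section SignedPermutation

variable {ι : Type*} [Fintype ι]

lemma existsUnique_ne_zero_of_sum_sq_eq_one {x : ι → ℝ}
    (hx : ∀ l, x l = 0 ∨ x l = 1 ∨ x l = -1) (hsum : ∑ l, x l ^ 2 = 1) : ∃! l, x l ≠ 0 := by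
  rw [Fintype.existsUnique_iff_card_one]
  have hsq : ∀ l, x l ^ 2 = if x l ≠ 0 then 1 else 0 := fun l => by
    rcases hx l with h | h | h <;> simp [h]
  simp only [hsq, sum_boole] at hsum
  exact_mod_cast hsum

lemma card_eq_four_of_sum_sq_eq_one {a : ι → ℝ} (ha : ∀ l, a l = 0 ∨ a l = 1 / 2 ∨ a l = 1)
    (hsum : ∑ l, a l ^ 2 = 1) {j : ι} (hj : a j = 1 / 2) : #{l | a l = 1 / 2} = 4 := by
  have hne : ∀ k, a k ≠ 1 := by
    intro k hk
    have hjk : j ≠ k := by rintro rfl; norm_num [hj] at hk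
    have := add_le_sum (f := fun l => a l ^ 2) (fun l _ => sq_nonneg _)
      (mem_univ j) (mem_univ k) hjk
    norm_num [hj, hk, hsum] at this
  have hsq : ∀ l, a l ^ 2 = if a l = 1 / 2 then 1 / 4 else 0 := fun l => by
    rcases ha l with h | h | h
    · simp [h]
    · norm_num [h]
    · exact absurd h (hne l)
  simp only [hsq, ← sum_filter, sum_const, nsmul_eq_mul] at hsum
  exact_mod_cast (by linarith : (#{l | a l = 1 / 2} : ℝ) = 4)

variable [DecidableEq ι]

theorem exists_signedPerm_of_mem_orthogonalGroup {T : Matrix ι ι ℝ}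
    (hT : T ∈ orthogonalGroup ι ℝ) (hentry : ∀ i j, T i j = 0 ∨ T i j = 1 ∨ T i j = -1) :
    ∃ σ : Equiv.Perm ι, ∃ ε : ι → ℝ, (∀ j, ε j = 1 ∨ ε j = -1) ∧
      ∀ i j, T i j = if i = σ j then ε j else 0 := by
  have hcol : ∀ j, ∃! i, T i j ≠ 0 := fun j =>
    existsUnique_ne_zero_of_sum_sq_eq_one (fun i => hentry i j) <| by
      simpa [mul_apply, sq] using congrFun (congrFun ((mem_orthogonalGroup_iff' ι ℝ).1 hT) j) j
  have hrow : ∀ i, ∃! j, T i j ≠ 0 := fun i =>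
    existsUnique_ne_zero_of_sum_sq_eq_one (hentry i) <| by
      simpa [mul_apply, sq] using congrFun (congrFun ((mem_orthogonalGroup_iff ι ℝ).1 hT) i) i
  choose σ hσ hσ_unique using hcol
  choose τ hτ hτ_unique using hrow
  let e : Equiv.Perm ι :=
    ⟨σ, τ, fun j => (hτ_unique _ j (hσ j)).symm, fun i => (hσ_unique _ i (hτ i)).symm⟩
  refine ⟨e, fun j => T (σ j) j, fun j => ?_, fun i j => ?_⟩
  · rcases hentry (σ j) j with h | h | h
    exacts [absurd h (hσ j), .inl h, .inr h]
  · change T i j = if i = σ j then T (σ j) j else 0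
    split_ifs with h
    · rw [h]
    · exact not_not.1 fun h' => h (hσ_unique j i h')

end SignedPermutation

section Codewords

noncomputable def codeword {n : ℕ} (α : ℕ) (S : Finset (Fin n)) (ε : Fin n → ℝ) :
    EuclideanSpace ℝ (Fin n) :=
  WithLp.toLp 2 fun j => if j ∈ S then ε j / √α else 0

variable {n α : ℕ} {S : Finset (Fin n)} {ε : Fin n → ℝ}

lemma codeword_mem_code (hS : #S = α) (hε : ∀ j, ε j = 1 ∨ ε j = -1) :
    codeword α S ε ∈ code n α := by
  have hsupp : ∀ j, codeword α S ε j ≠ 0 ↔ j ∈ S := by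
    intro j
    by_cases hj : j ∈ S
    · have hα : (0 : ℝ) < α := by exact_mod_cast hS ▸ card_pos.2 ⟨j, hj⟩
      rcases hε j with h | h <;> simp [codeword, hj, h, hα.ne']
    · simp [codeword, hj]
  refine ⟨fun j => ?_, ?_⟩
  · by_cases hj : j ∈ S
    · rcases hε j with h | h <;> simp [codeword, hj, h, neg_div]
    · simp [codeword, hj]
  · rw [filter_congr fun j _ => hsupp j, filter_mem_eq_inter, univ_inter, hS]

lemma mulVec_codeword_apply (T : Matrix (Fin n) (Fin n) ℝ) (i : Fin n) :
    (T *ᵥ codeword α S ε) i = (∑ j ∈ S, ε j * T i j) / √α := by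
  simp only [mulVec, dotProduct, codeword, mul_ite, mul_zero, sum_ite_mem, univ_inter, sum_div]
  exact sum_congr rfl fun j _ => by ring

end Codewords

section MapsCode

variable {n α : ℕ} {T : Matrix (Fin n) (Fin n) ℝ}

lemma signed_sum_mem_of_mapsTo_code
    (hmap : Set.MapsTo (fun c : EuclideanSpace ℝ (Fin n) ↦ WithLp.toLp 2 (T *ᵥ c))
      (code n α) (code n α))
    (i : Fin n) {S : Finset (Fin n)} (hS : #S = α)
    {ε : Fin n → ℝ} (hε : ∀ j, ε j = 1 ∨ ε j = -1) :
    ∑ j ∈ S, ε j * T i j ∈ ({0, 1, -1} : Set ℝ) := by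
  rcases S.eq_empty_or_nonempty with rfl | hSne
  · simp
  have hα : (0 : ℝ) < √α := Real.sqrt_pos.2 (by exact_mod_cast hS ▸ card_pos.2 hSne)
  have h := (hmap (codeword_mem_code hS hε)).1 i
  rw [WithLp.ofLp_toLp, mulVec_codeword_apply] at h
  rcases h with h | h | h <;> field_simp at h <;> simp [h]

lemma abs_entry_mem_of_mapsTo_code (hα : 0 < α) (hαn : α ≤ n)
    (hmap : Set.MapsTo (fun c : EuclideanSpace ℝ (Fin n) ↦ WithLp.toLp 2 (T *ᵥ c))
      (code n α) (code n α))
    (i j : Fin n) : |T i j| = 0 ∨ |T i j| = 1 / 2 ∨ |T i j| = 1 := by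
  obtain ⟨S, hjS, hS⟩ := exists_superset_card_eq (s := {j}) (by simpa) (by simpa)
  have hj : j ∈ S := hjS (mem_singleton_self j)
  have hp := signed_sum_mem_of_mapsTo_code hmap i hS (ε := fun _ => 1) (by simp)
  have hm := signed_sum_mem_of_mapsTo_code hmap i hS (ε := fun l => if l = j then -1 else 1)
    (fun l => by split_ifs <;> simp)
  set sp := ∑ l ∈ S, (fun _ => (1 : ℝ)) l * T i l
  set sm := ∑ l ∈ S, (fun l => if l = j then (-1 : ℝ) else 1) l * T i l
  have hT : T i j = (sp - sm) / 2 := by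
    rw [← sum_sub_distrib, sum_eq_single_of_mem j hj fun l _ hl => by simp [hl]]
    simp only [if_true]
    ring
  simp only [Set.mem_insert_iff, Set.mem_singleton_iff] at hp hm
  rcases hp with hp | hp | hp <;> rcases hm with hm | hm | hm <;>
    rw [hT, hp, hm] <;> norm_num

lemma sum_abs_le_one_of_mapsTo_code
    (hmap : Set.MapsTo (fun c : EuclideanSpace ℝ (Fin n) ↦ WithLp.toLp 2 (T *ᵥ c))
      (code n α) (code n α))
    (i : Fin n) {S : Finset (Fin n)} (hS : #S = α) : ∑ l ∈ S, |T i l| ≤ 1 := by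
  have hsign : ∀ l, (if 0 ≤ T i l then 1 else -1) * T i l = |T i l| := fun l => by
    split_ifs with h
    · simp [abs_of_nonneg h]
    · simp [abs_of_neg (not_le.1 h)]
  have h := signed_sum_mem_of_mapsTo_code hmap i hS (ε := fun l => if 0 ≤ T i l then 1 else -1)
    (fun l => by split_ifs <;> simp)
  simp only [hsign, Set.mem_insert_iff, Set.mem_singleton_iff] at h
  rcases h with h | h | h <;> linarith

lemma abs_entry_ne_half_of_mapsTo_code (hα : 3 ≤ α) (hαn : α ≤ n)
    (hT : T ∈ orthogonalGroup (Fin n) ℝ)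
    (hmap : Set.MapsTo (fun c : EuclideanSpace ℝ (Fin n) ↦ WithLp.toLp 2 (T *ᵥ c))
      (code n α) (code n α))
    (i j : Fin n) : |T i j| ≠ 1 / 2 := by
  intro hj
  have hrow : ∑ l, |T i l| ^ 2 = 1 := by
    simpa [mul_apply, sq] using congrFun (congrFun ((mem_orthogonalGroup_iff (Fin n) ℝ).1 hT) i) i
  have hhalf := card_eq_four_of_sum_sq_eq_one
    (fun l => abs_entry_mem_of_mapsTo_code (by omega) hαn hmap i l) hrow hj
  obtain ⟨H, hH, hHcard⟩ := exists_subset_card_eq (s := {l | |T i l| = 1 / 2}) (n := 3) (by omega)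
  obtain ⟨S, hHS, hS⟩ := exists_superset_card_eq (s := H) (n := α) (by omega) (by simpa)
  have hsumH : ∑ l ∈ H, |T i l| = 3 / 2 := by
    rw [sum_congr rfl fun l hl => (mem_filter.1 (hH hl)).2, sum_const, hHcard]
    norm_num
  have hHS : ∑ l ∈ H, |T i l| ≤ ∑ l ∈ S, |T i l| :=
    sum_le_sum_of_subset_of_nonneg hHS fun _ _ _ => abs_nonneg _
  linarith [sum_abs_le_one_of_mapsTo_code hmap i hS]

lemma entry_mem_of_mapsTo_code (hα : 3 ≤ α) (hαn : α ≤ n)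
    (hT : T ∈ orthogonalGroup (Fin n) ℝ)
    (hmap : Set.MapsTo (fun c : EuclideanSpace ℝ (Fin n) ↦ WithLp.toLp 2 (T *ᵥ c))
      (code n α) (code n α))
    (i j : Fin n) : T i j = 0 ∨ T i j = 1 ∨ T i j = -1 := by
  rcases abs_entry_mem_of_mapsTo_code (by omega) hαn hmap i j with h | h | h
  · exact .inl (abs_eq_zero.1 h)
  · exact absurd h (abs_entry_ne_half_of_mapsTo_code hα hαn hT hmap i j)
  · exact .inr ((abs_eq zero_le_one).1 h)

end MapsCode

theorem stmt_5 (n α : ℕ) (hα : 3 ≤ α) (hαn : α < n)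
    (T : Matrix (Fin n) (Fin n) ℝ) (hT : T ∈ Matrix.orthogonalGroup (Fin n) ℝ)
    (hmap : ∀ c ∈ code n α, (WithLp.toLp 2 (T.mulVec c) : EuclideanSpace ℝ (Fin n)) ∈ code n α) :
    ∃ σ : Equiv.Perm (Fin n), ∃ ε : Fin n → ℝ, (∀ j, ε j = 1 ∨ ε j = -1) ∧
      ∀ i j, T i j = if i = σ j then ε j else 0 :=
  exists_signedPerm_of_mem_orthogonalGroup hT (entry_mem_of_mapsTo_code hα hαn.le hT hmap)
end

section
/- Let c ∈ C_α and u ∈ S^{n−1} with Angle(u, c) < (1/2)·arccos(1 − 1/α) · (1/2), i.e., strictly less than half the design distance θ = (1/2)arccos(1−1/α). Then for every codeword c' ∈ C_α with c' ≠ c, Angle(u, c') > Angle(u, c); in particular the nearest codeword to u is uniquely c. -/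
open scoped RealInnerProductSpace

lemma code_inner_self (n α : ℕ) (hα : 1 ≤ α) (c : EuclideanSpace ℝ (Fin n))
    (hc : c ∈ code n α) : ⟪c, c⟫ = 1 := by
  obtain ⟨hval, hcard⟩ := hc
  have hα0 : (α : ℝ) ≠ 0 := by positivity
  have hsq : ∀ i, c i ≠ 0 → c i * c i = 1 / α := by
    intro i hi
    rcases hval i with h | h | h
    · exact absurd h hi
    · rw [h]; rw [div_mul_div_comm, one_mul, Real.mul_self_sqrt (by positivity)]
    · rw [h]; rw [neg_mul_neg, div_mul_div_comm, one_mul,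
        Real.mul_self_sqrt (by positivity)]
  have : ⟪c, c⟫ = ∑ i, c i * c i := by
    rw [PiLp.inner_apply]; simp only [RCLike.inner_apply, conj_trivial, mul_comm]
  rw [this, ← Finset.sum_filter_ne_zero Finset.univ (f := fun i => c i * c i)]
  have hfe : Finset.univ.filter (fun i => c i * c i ≠ 0)
      = Finset.univ.filter (fun i => c i ≠ 0) := by
    apply Finset.filter_congr; intro i _; simp [mul_self_eq_zero]
  rw [hfe, Finset.sum_congr rfl (fun i hi => hsq i (Finset.mem_filter.1 hi).2),
    Finset.sum_const, hcard, nsmul_eq_mul]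
  field_simp

lemma code_norm (n α : ℕ) (hα : 1 ≤ α) (c : EuclideanSpace ℝ (Fin n))
    (hc : c ∈ code n α) : ‖c‖ = 1 := by
  have h := code_inner_self n α hα c hc
  rw [real_inner_self_eq_norm_sq] at h
  nlinarith [norm_nonneg c]

lemma code_inner_le (n α : ℕ) (hα : 1 ≤ α) (c c' : EuclideanSpace ℝ (Fin n))
    (hc : c ∈ code n α) (hc' : c' ∈ code n α) (hne : c' ≠ c) :
    ⟪c, c'⟫ ≤ 1 - 1 / (α : ℝ) := by
  obtain ⟨hval, hcard⟩ := hc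
  obtain ⟨hval', hcard'⟩ := hc'
  have hα0 : (0:ℝ) < α := by positivity
  have hs0 : (0:ℝ) < Real.sqrt α := Real.sqrt_pos.2 hα0
  set S := Finset.univ.filter (fun i => c i ≠ 0) with hS
  set S' := Finset.univ.filter (fun i => c' i ≠ 0) with hS'
  -- terms bounded by 1/α
  have hterm : ∀ i, c i * c' i ≤ 1 / α := by
    intro i
    have key : (1 / Real.sqrt α) * (1 / Real.sqrt α) = 1 / α := by
      rw [div_mul_div_comm, one_mul, Real.mul_self_sqrt hα0.le]
    rcases hval i with h | h | h <;> rcases hval' i with h' | h' | h' <;>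
      rw [h, h'] <;> nlinarith
  -- some index in S with c' i ≠ c i
  have hex : ∃ i ∈ S, c' i ≠ c i := by
    by_contra hcon
    push_neg at hcon
    apply hne
    have hsub : S ⊆ S' := by
      intro i hi
      have := hcon i hi
      simp only [hS, hS', Finset.mem_filter, Finset.mem_univ, true_and] at hi ⊢
      rw [this]; exact hi
    have hSeq : S = S' := Finset.eq_of_subset_of_card_le hsub (by rw [hcard, hcard'])
    ext i
    by_cases hi : i ∈ S
    · exact hcon i hi
    · have hi' : i ∉ S' := hSeq ▸ hi
      simp only [hS, hS', Finset.mem_filter, Finset.mem_univ, true_and,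
        not_not] at hi hi'
      rw [hi, hi']
  obtain ⟨i₀, hi₀S, hi₀⟩ := hex
  have hci₀ : c i₀ ≠ 0 := (Finset.mem_filter.1 hi₀S).2
  have hterm0 : c i₀ * c' i₀ ≤ 0 := by
    rcases hval i₀ with h | h | h <;> rcases hval' i₀ with h' | h' | h' <;>
      first
        | exact absurd h hci₀
        | exact absurd (h'.trans h.symm) hi₀
        | (rw [h, h']; nlinarith [hs0, sq_nonneg (1 / Real.sqrt (α:ℝ))])
  have hip : ⟪c, c'⟫ = ∑ i ∈ S, c i * c' i := by
    have h1 : ⟪c, c'⟫ = ∑ i, c i * c' i := by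
      rw [PiLp.inner_apply]; simp only [RCLike.inner_apply, conj_trivial, mul_comm]
    rw [h1]
    refine (Finset.sum_subset (Finset.subset_univ S) ?_).symm
    intro i _ hi
    simp only [hS, Finset.mem_filter, Finset.mem_univ, true_and, not_not] at hi
    rw [hi, zero_mul]
  rw [hip, ← Finset.add_sum_erase S _ hi₀S]
  have hb : ∑ i ∈ S.erase i₀, c i * c' i ≤ (S.erase i₀).card • ((1:ℝ)/α) :=
    Finset.sum_le_card_nsmul _ _ _ (fun i _ => hterm i)
  rw [Finset.card_erase_of_mem hi₀S, hcard, nsmul_eq_mul,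
    Nat.cast_sub hα, Nat.cast_one] at hb
  have hcast : ((α:ℝ) - 1) * (1/α) = 1 - 1/α := by field_simp
  rw [hcast] at hb
  linarith
theorem stmt_7 (n α : ℕ) (hα : 1 ≤ α)
    (c u : EuclideanSpace ℝ (Fin n)) (hc : c ∈ code n α) (hu : ‖u‖ = 1)
    (hclose : Real.arccos ⟪u, c⟫ < (1 / 2) * Real.arccos (1 - 1 / (α : ℝ)) * (1 / 2)) :
    ∀ c' ∈ code n α, c' ≠ c → Real.arccos ⟪u, c'⟫ > Real.arccos ⟪u, c⟫ := by
  intro c' hc' hne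
  have hα0 : (0:ℝ) < α := by positivity
  have hnc : ‖c‖ = 1 := code_norm n α hα c hc
  have hnc' : ‖c'‖ = 1 := code_norm n α hα c' hc'
  set a := ⟪u, c⟫ with ha
  set b := ⟪u, c'⟫ with hb
  have haI : |a| ≤ 1 := by
    have := abs_real_inner_le_norm u c; rwa [hu, hnc, one_mul] at this
  have hbI : |b| ≤ 1 := by
    have := abs_real_inner_le_norm u c'; rwa [hu, hnc', one_mul] at this
  rw [abs_le] at haI hbI
  set φ := Real.arccos (1 - 1 / (α : ℝ)) with hφ
  have harg0 : (0:ℝ) ≤ 1 - 1 / α := by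
    have : (1:ℝ) ≤ α := by exact_mod_cast hα
    have : 1 / (α:ℝ) ≤ 1 := by rw [div_le_one hα0]; exact this
    linarith
  have harg1 : 1 - 1 / (α:ℝ) ≤ 1 := by
    have : (0:ℝ) < 1 / α := by positivity
    linarith
  have hφ2 : φ ≤ Real.pi / 2 := Real.arccos_le_pi_div_two.2 harg0
  have hφpi : φ ≤ Real.pi := by linarith [Real.pi_pos]
  -- a > cos (φ/4)
  have hac : Real.cos (φ / 4) < a := by
    have h1 : Real.arccos a < φ / 4 := by rw [hφ]; linarith
    have := Real.cos_lt_cos_of_nonneg_of_le_pi (Real.arccos_nonneg a)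
      (by linarith [Real.pi_pos]) h1
    rwa [Real.cos_arccos haI.1 haI.2] at this
  set x := φ / 8 with hx
  have hx0 : 0 ≤ x := by
    have := Real.arccos_nonneg (1 - 1 / (α:ℝ)); rw [hx]; linarith
  have hx16 : x ≤ Real.pi / 16 := by rw [hx]; linarith
  have hpi : 0 < Real.pi := Real.pi_pos
  set s := Real.sin x with hs
  have hs0 : 0 ≤ s := Real.sin_nonneg_of_nonneg_of_le_pi hx0 (by linarith)
  set d1 := ‖u - c‖ with hd1
  set d2 := ‖u - c'‖ with hd2
  set D := ‖c - c'‖ with hD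
  have hd1sq : d1 ^ 2 = 2 - 2 * a := by
    rw [hd1, norm_sub_sq_real, hu, hnc]; ring
  have hd2sq : d2 ^ 2 = 2 - 2 * b := by
    rw [hd2, norm_sub_sq_real, hu, hnc']; ring
  have hDsq : D ^ 2 ≥ 2 - 2 * Real.cos (2 * (4 * x)) := by
    have hcc : ⟪c, c'⟫ ≤ 1 - 1 / (α:ℝ) := code_inner_le n α hα c c' hc hc' hne
    have h8 : 2 * (4 * x) = φ := by rw [hx]; ring
    rw [h8, hφ, Real.cos_arccos (by linarith) harg1]
    rw [hD, norm_sub_sq_real, hnc, hnc']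
    linarith
  have hd1nn : 0 ≤ d1 := norm_nonneg _
  have hd2nn : 0 ≤ d2 := norm_nonneg _
  have hDnn : 0 ≤ D := norm_nonneg _
  have htri : D ≤ d1 + d2 := by
    have he : c - c' = -(u - c) + (u - c') := by abel
    rw [hD, he]
    calc ‖-(u - c) + (u - c')‖ ≤ ‖-(u - c)‖ + ‖u - c'‖ := norm_add_le _ _
      _ = d1 + d2 := by rw [norm_neg]
  clear_value d1 d2 D a b s x φ
  clear ha hb hd1 hd2 hD hc hc' hu hne hnc hnc' c c' u
  -- half angle identity
  have hhalf : ∀ t : ℝ, 2 - 2 * Real.cos (2 * t) = 4 * Real.sin t ^ 2 := by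
    intro t
    have h1 := Real.cos_two_mul t
    have h2 := Real.sin_sq_add_cos_sq t
    linarith
  have hd1lt : d1 < 2 * s := by
    have h1 : d1 ^ 2 < 4 * s ^ 2 := by
      have hh : 2 - 2 * Real.cos (2 * x) = 4 * s ^ 2 := by rw [hs]; exact hhalf x
      have h2 : Real.cos (φ/4) = Real.cos (2 * x) := by
        congr 1; rw [hx]; ring
      linarith
    have h4s : (0:ℝ) ≤ 2 * s := by linarith
    have := lt_of_pow_lt_pow_left₀ 2 h4s (by rw [show (2*s)^2 = 4*s^2 from by ring]; linarith : d1 ^ 2 < (2*s) ^ 2)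
    exact this
  have hsin4 : 0 ≤ Real.sin (4 * x) :=
    Real.sin_nonneg_of_nonneg_of_le_pi (by linarith) (by linarith)
  have hDge : D ≥ 2 * Real.sin (4 * x) := by
    have h1 : D ^ 2 ≥ 4 * Real.sin (4 * x) ^ 2 := by rw [← hhalf (4*x)]; exact hDsq
    have := le_of_pow_le_pow_left₀ (two_ne_zero) hDnn
      (by rw [show (2*Real.sin (4*x))^2 = 4*Real.sin (4*x)^2 from by ring]; linarith : (2 * Real.sin (4*x)) ^ 2 ≤ D ^ 2)
    linarith
  -- sin (4x) ≥ 2 sin x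
  have hkey : Real.sin (4 * x) ≥ 2 * s := by
    have e1 : Real.sin (4 * x) = 2 * Real.sin (2 * x) * Real.cos (2 * x) := by
      rw [show (4:ℝ) * x = 2 * (2 * x) by ring, Real.sin_two_mul]
    have e2 : Real.sin (2 * x) = 2 * Real.sin x * Real.cos x := Real.sin_two_mul x
    have hc1 : Real.cos (Real.pi / 4) ≤ Real.cos x :=
      Real.cos_le_cos_of_nonneg_of_le_pi hx0 (by linarith) (by linarith)
    have hc2 : Real.cos (Real.pi / 4) ≤ Real.cos (2 * x) :=
      Real.cos_le_cos_of_nonneg_of_le_pi (by linarith) (by linarith) (by linarith)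
    rw [Real.cos_pi_div_four] at hc1 hc2
    have h2 : (0:ℝ) < Real.sqrt 2 := by positivity
    have h3 : Real.sqrt 2 ^ 2 = 2 := Real.sq_sqrt (by norm_num)
    have hcx0 : (0:ℝ) ≤ Real.cos x := by linarith
    have h4 : Real.cos x * Real.cos (2 * x) ≥ 1 / 2 := by
      have hm := mul_le_mul hc1 hc2 (by positivity) hcx0
      have h5 : Real.sqrt 2 / 2 * (Real.sqrt 2 / 2) = 1/2 := by
        rw [div_mul_div_comm, Real.mul_self_sqrt (by norm_num : (0:ℝ) ≤ 2)]
        norm_num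
      linarith
    rw [e1, e2, ← hs]
    have h6 : (0:ℝ) ≤ s * (Real.cos x * Real.cos (2*x) - 1/2) :=
      mul_nonneg hs0 (by linarith)
    nlinarith [h6]
  have hd2gt : d2 > d1 := by linarith
  have hba : b < a := by
    have := pow_lt_pow_left₀ hd2gt hd1nn (n := 2) two_ne_zero
    linarith
  exact Real.strictAntiOn_arccos ⟨hbI.1, hbI.2⟩ ⟨haI.1, haI.2⟩ hba
end
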